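/- arXiv:2311.06872 — 5 statements merged into one kernel-verified Lean document; each statement's English description precedes it below -/
import Mathlib

section
/- Let (T,⪯,Σ,S) be an S-tree and f : T → T a shape-preserving function. Then f preserves meets: for all a, b ∈ T with a and b having the same level-0 predecessor, f(a ∧ b) = f(a) ∧ f(b), where a ∧ b denotes the ⪯-maximal common lower bound of a and b. -/
variable {T : Type*} [PartialOrder T] {A : Type*}

/-- The level of a node: the number of its strict predecessors. -/
noncomputable def lvl (a : T) : ℕ := {b : T | b < a}.ncard

/-- `(T, ≤, A, S)` is an S-tree: a countable finitely branching tree with finitely many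
level-0 nodes, together with a partial successor operation `S` (modelled with `Option`)
satisfying axioms (S1), (S2) and (S3). Here `a ⋖ q` means `q` is an immediate successor
of `a`. -/
structure IsSTree (S : T → List T → A → Option T) : Prop where
  countable : Countable T
  pred_finite : ∀ a : T, {b : T | b < a}.Finite
  pred_chain : ∀ a : T, IsChain (· ≤ ·) {b : T | b < a}
  finite_branching : ∀ a : T, {b : T | a ⋖ b}.Finite
  finite_roots : {a : T | lvl a = 0}.Finite
  s1_cov : ∀ (a : T) (p : List T) (c : A) (q : T), S a p c = some q → a ⋖ q
  s1_param : ∀ (a : T) (p : List T) (c : A) (q : T), S a p c = some q →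
    ∀ x ∈ p, lvl x + 1 ≤ lvl a
  s2 : ∀ (a a' : T) (p p' : List T) (c c' : A) (q : T),
    S a p c = some q → S a' p' c' = some q → a = a' ∧ p = p' ∧ c = c'
  s3 : ∀ a b : T, a ⋖ b → ∃ (p : List T) (c : A), S a p c = some b

/-- `F` is a shape-preserving function of the S-tree `(T, ≤, A, S)`: an injection that is
level-preserving, weakly `S`-preserving, and preserves the level-0 predecessor relation. -/
structure IsShapePres (S : T → List T → A → Option T) (F : T → T) : Prop where
  inj : Function.Injective F
  lvl_pres : ∀ a b : T, lvl a = lvl b → lvl (F a) = lvl (F b)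
  weak_S : ∀ (a : T) (p : List T) (c : A) (q : T), S a p c = some q →
    ∃ q' : T, S (F a) (p.map F) c = some q' ∧ q' ≤ F q
  root : ∀ a b : T, lvl a = 0 → a ≤ b → a ≤ F b

/-- `m` is the meet of `a` and `b`: a `≤`-maximal common lower bound of `a` and `b`. -/
def IsMeetOf (m a b : T) : Prop :=
  m ≤ a ∧ m ≤ b ∧ ∀ c : T, m ≤ c → c ≤ a → c ≤ b → c = m

/-! A shape-preserving map is monotone: by (S3) every cover `a ⋖ u` is an `S`-step, so weak
`S`-preservation and (S1) give a cover of `f a` below `f u`. So `f (a ∧ b)` is a common lower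
bound of `f a` and `f b`, comparable with `f a ∧ f b` since both lie below `f a` in a tree, and
maximality of the meet leaves only `f (a ∧ b) < f a ∧ f b` to exclude. In that case the two
covers of `a ∧ b` towards `a` and towards `b` would be sent to two covers of `f (a ∧ b)`, distinct
by (S2) and injectivity, both below `f a ∧ f b`; in a tree two distinct covers of a node have no
common upper bound. -/

noncomputable abbrev LocallyFiniteOrder.ofFiniteIio {α : Type*} [PartialOrder α]
    (h : ∀ a : α, (Set.Iio a).Finite) : LocallyFiniteOrder α :=
  LocallyFiniteOrder.ofFiniteIcc fun _ b => ((h b).insert b).subset fun _ hx => hx.2.eq_or_lt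

section Forest

variable {α : Type*} [PartialOrder α]

theorem le_total_of_le_of_le (hchain : ∀ t : α, IsChain (· ≤ ·) (Set.Iio t)) {x y t : α}
    (hx : x ≤ t) (hy : y ≤ t) : x ≤ y ∨ y ≤ x := by
  rcases hx.eq_or_lt with rfl | hx
  · exact Or.inr hy
  rcases hy.eq_or_lt with rfl | hy
  · exact Or.inl hx.le
  obtain rfl | hne := eq_or_ne x y
  · exact Or.inl le_rfl
  · exact hchain t hx hy hne

theorem CovBy.le_of_lt_of_le_of_le (hchain : ∀ t : α, IsChain (· ≤ ·) (Set.Iio t))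
    {x q y t : α} (hq : x ⋖ q) (hxy : x < y) (hqt : q ≤ t) (hyt : y ≤ t) : q ≤ y := by
  rcases le_total_of_le_of_le hchain hqt hyt with hqy | hyq
  · exact hqy
  rcases hyq.eq_or_lt with rfl | hyq
  · exact le_rfl
  · exact (hq.2 hxy hyq).elim

theorem CovBy.eq_of_covBy_of_le_of_le (hchain : ∀ t : α, IsChain (· ≤ ·) (Set.Iio t))
    {x q q' t : α} (hq : x ⋖ q) (hq' : x ⋖ q') (hqt : q ≤ t) (hq't : q' ≤ t) : q = q' :=
  le_antisymm (hq.le_of_lt_of_le_of_le hchain hq'.lt hqt hq't)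
    (hq'.le_of_lt_of_le_of_le hchain hq.lt hq't hqt)

theorem IsMeetOf.exists_covBy_ne [IsStronglyAtomic α] {m a b : α} (hm : IsMeetOf m a b)
    (ha : m < a) (hb : m < b) : ∃ u v, m ⋖ u ∧ u ≤ a ∧ m ⋖ v ∧ v ≤ b ∧ u ≠ v := by
  obtain ⟨u, hu, hua⟩ := exists_covBy_le_of_lt ha
  obtain ⟨v, hv, hvb⟩ := exists_covBy_le_of_lt hb
  refine ⟨u, v, hu, hua, hv, hvb, ?_⟩
  rintro rfl
  exact hu.lt.ne' (hm.2.2 u hu.le hua hvb)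

end Forest

namespace IsShapePres

variable {S : T → List T → A → Option T} {f : T → T}

theorem exists_covBy_le (hS : IsSTree S) (hf : IsShapePres S f) {a u : T} (hu : a ⋖ u) :
    ∃ q, f a ⋖ q ∧ q ≤ f u := by
  obtain ⟨p, c, hpc⟩ := hS.s3 a u hu
  obtain ⟨q, hq, hqu⟩ := hf.weak_S a p c u hpc
  exact ⟨q, hS.s1_cov _ _ _ _ hq, hqu⟩

theorem monotone [LocallyFiniteOrder T] (hS : IsSTree S) (hf : IsShapePres S f) :
    Monotone f :=
  (monotone_iff_forall_covBy f).2 fun _ _ hu =>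
    let ⟨_, hq, hqu⟩ := hf.exists_covBy_le hS hu
    hq.le.trans hqu

theorem exists_covBy_ne (hS : IsSTree S) (hf : IsShapePres S f) {a u v : T} (hu : a ⋖ u)
    (hv : a ⋖ v) (huv : u ≠ v) :
    ∃ q q', f a ⋖ q ∧ q ≤ f u ∧ f a ⋖ q' ∧ q' ≤ f v ∧ q ≠ q' := by
  obtain ⟨p, c, hpc⟩ := hS.s3 a u hu
  obtain ⟨p', c', hpc'⟩ := hS.s3 a v hv
  obtain ⟨q, hq, hqu⟩ := hf.weak_S a p c u hpc
  obtain ⟨q', hq', hq'v⟩ := hf.weak_S a p' c' v hpc'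
  refine ⟨q, q', hS.s1_cov _ _ _ _ hq, hqu, hS.s1_cov _ _ _ _ hq', hq'v, ?_⟩
  rintro rfl
  obtain ⟨-, hp, rfl⟩ := hS.s2 _ _ _ _ _ _ _ hq hq'
  obtain rfl := List.map_injective_iff.mpr hf.inj hp
  exact huv (Option.some.inj (hpc.symm.trans hpc'))

end IsShapePres

/-- a shape-preserving function of an S-tree preserves meets: for nodes `a`, `b`
having a common level-0 predecessor, `f(a ∧ b) = f(a) ∧ f(b)`. -/
theorem stmt_3 (S : T → List T → A → Option T) (hS : IsSTree S)
    (f : T → T) (hf : IsShapePres S f) :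
    ∀ a b m m' : T, (∃ r : T, lvl r = 0 ∧ r ≤ a ∧ r ≤ b) →
      IsMeetOf m a b → IsMeetOf m' (f a) (f b) → f m = m' := by
  let _ : LocallyFiniteOrder T := .ofFiniteIio hS.pred_finite
  intro a b m m' _ hm hm'
  have hfa : f m ≤ f a := hf.monotone hS hm.1
  have hfb : f m ≤ f b := hf.monotone hS hm.2.1
  rcases le_total_of_le_of_le hS.pred_chain hfa hm'.1 with hle | hle
  swap
  · exact hm'.2.2 _ hle hfa hfb
  refine hle.eq_or_lt.resolve_right fun hlt => ?_
  have ha : m < a := hm.1.lt_of_ne (by rintro rfl; exact hlt.not_ge hm'.1)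
  have hb : m < b := hm.2.1.lt_of_ne (by rintro rfl; exact hlt.not_ge hm'.2.1)
  obtain ⟨u, v, hu, hua, hv, hvb, huv⟩ := hm.exists_covBy_ne ha hb
  obtain ⟨q, q', hq, hqu, hq', hq'v, hqq'⟩ := hf.exists_covBy_ne hS hu hv huv
  have hqm' : q ≤ m' :=
    hq.le_of_lt_of_le_of_le hS.pred_chain hlt (hqu.trans (hf.monotone hS hua)) hm'.1
  have hq'm' : q' ≤ m' :=
    hq'.le_of_lt_of_le_of_le hS.pred_chain hlt (hq'v.trans (hf.monotone hS hvb)) hm'.2.1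
  exact hqq' (hq.eq_of_covBy_of_le_of_le hS.pred_chain hq' hqm' hq'm')
end

section
/- For every finite alphabet Σ and positive integer r there exists N such that for every r-colouring χ of the set Σ^{≤N} of words of length at most N there exists a combinatorial line L of length at most N that is χ-monochromatic together with its star-truncation; that is, χ is constant on the set {L(c) : c ∈ Σ} ∪ {L(*)}, where L(c) is the word obtained by substituting c for every occurrence of the parameter λ in L, and L(*) is the initial segment of L preceding the first occurrence of λ. -/
/-! A colouring `χ` of short words colours each prefix `w` by its "tail colouring"
`z ↦ χ (w ++ z)` on short tails `z`, which takes finitely many values. The ordinary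
Hales–Jewett theorem gives a line `L₀` whose points `L₀(c)` all have the same tail colouring
`Φ`. If `Φ` attains the colour of `L₀(*)` at some tail `z`, then `L₀` followed by the constant
word `z` is the required line. Otherwise the colouring `z ↦ χ (L₀(c) ++ z)` of short words
uses one colour fewer, and a line found for it by induction on the number of colours can be
prefixed by the constant word `L₀(c)`. -/

/-- Words over `Σ ∪ {λ}` are modelled as lists of `Option Σ`, with `none` playing the role
of the parameter `λ`. For a combinatorial line `L` (a word in which `none` occurs),
`L(c)` substitutes `c` for every occurrence of the parameter. -/
def lineSubst {A : Type*} (L : List (Option A)) (c : A) : List A :=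
  L.map (fun x => x.getD c)

/-- `L(*)`: the initial segment of `L` preceding the first occurrence of the parameter. -/
def lineStar {A : Type*} [Inhabited A] (L : List (Option A)) : List A :=
  (L.takeWhile Option.isSome).map (fun x => x.getD default)

open Combinatorics

section Words

variable {A : Type*}

@[simp]
lemma lineSubst_append (L₁ L₂ : List (Option A)) (c : A) :
    lineSubst (L₁ ++ L₂) c = lineSubst L₁ c ++ lineSubst L₂ c :=
  List.map_append

@[simp]
lemma lineSubst_map_some (w : List A) (c : A) : lineSubst (w.map some) c = w := by
  simp [lineSubst, Function.comp_def]

@[simp]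
lemma length_lineSubst (L : List (Option A)) (c : A) : (lineSubst L c).length = L.length :=
  List.length_map _

variable [Inhabited A]

lemma lineStar_append_of_none_mem {L₁ : List (Option A)} (L₂ : List (Option A))
    (h : none ∈ L₁) : lineStar (L₁ ++ L₂) = lineStar L₁ := by
  have hprefix : L₁.takeWhile Option.isSome ≠ L₁ := fun heq =>
    absurd (List.takeWhile_eq_self_iff.1 heq none h) (by simp)
  rw [lineStar, lineStar, List.takeWhile_append, if_neg fun hlen =>
    hprefix ((List.takeWhile_prefix _).eq_of_length hlen)]

@[simp]
lemma lineStar_map_some_append (w : List A) (L : List (Option A)) :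
    lineStar (w.map some ++ L) = w ++ lineStar L := by
  simp [lineStar, Function.comp_def]

lemma length_lineStar_le (L : List (Option A)) : (lineStar L).length ≤ L.length := by
  simpa [lineStar] using (List.takeWhile_sublist Option.isSome).length_le

def IsMonoStarLine {κ : Type*} (χ : List A → κ) (L : List (Option A)) : Prop :=
  none ∈ L ∧ ∀ c, χ (lineSubst L c) = χ (lineStar L)

lemma IsMonoStarLine.map_some_append {κ : Type*} {χ : List A → κ} {w : List A}
    {L : List (Option A)} (h : IsMonoStarLine (fun z => χ (w ++ z)) L) :
    IsMonoStarLine χ (w.map some ++ L) :=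
  ⟨List.mem_append_right _ h.1, fun c => by simpa using h.2 c⟩

lemma isMonoStarLine_append_map_some {κ : Type*} {χ : List A → κ} {L : List (Option A)}
    {z : List A} (hL : none ∈ L) (h : ∀ c, χ (lineSubst L c ++ z) = χ (lineStar L)) :
    IsMonoStarLine χ (L ++ z.map some) :=
  ⟨List.mem_append_left _ hL, fun c => by
    simpa [lineStar_append_of_none_mem _ hL] using h c⟩

end Words

theorem exists_mono_line_list (A : Type*) [Finite A] (κ : Type*) [Finite κ] :
    ∃ n, ∀ χ : List A → κ, ∃ L : List (Option A), L.length ≤ n ∧ none ∈ L ∧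
      ∃ col, ∀ c, χ (lineSubst L c) = col := by
  obtain ⟨ι, _, hι⟩ := Line.exists_mono_in_high_dimension A κ
  let e := Fintype.equivFin ι
  refine ⟨Fintype.card ι, fun χ => ?_⟩
  obtain ⟨l, col, hl⟩ := hι fun v => χ (List.ofFn (v ∘ e.symm))
  refine ⟨List.ofFn (l.idxFun ∘ e.symm), by simp, ?_, col, fun c => ?_⟩
  · obtain ⟨i, hi⟩ := l.proper
    exact List.mem_ofFn.2 ⟨e i, by simp [hi]⟩
  · rw [← hl c, lineSubst, List.map_ofFn]
    rfl

theorem exists_isMonoStarLine_of_card_le (A : Type*) [Finite A] [Inhabited A] {κ : Type*}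
    [Finite κ] (k : ℕ) :
    ∃ N, ∀ S : Finset κ, S.card ≤ k → ∀ χ : List A → κ,
      (∀ w : List A, w.length ≤ N → χ w ∈ S) →
        ∃ L : List (Option A), L.length ≤ N ∧ IsMonoStarLine χ L := by
  induction k with
  | zero =>
    refine ⟨0, fun S hS χ hχ => ?_⟩
    rw [Nat.le_zero, Finset.card_eq_zero] at hS
    exact absurd (hχ [] le_rfl) (by simp [hS])
  | succ k ih =>
    obtain ⟨N', hN'⟩ := ih
    have : Finite {z : List A // z.length ≤ N'} := (List.finite_length_le A N').to_subtype
    obtain ⟨n, hn⟩ := exists_mono_line_list A ({z : List A // z.length ≤ N'} → κ)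
    refine ⟨n + N', fun S hS χ hχ => ?_⟩
    obtain ⟨L₀, hL₀, hnone, Φ, hΦ⟩ := hn fun w z => χ (w ++ z)
    have htail (c : A) (z : List A) (hz : z.length ≤ N') :
        χ (lineSubst L₀ c ++ z) = Φ ⟨z, hz⟩ :=
      congrFun (hΦ c) ⟨z, hz⟩
    set v := χ (lineStar L₀)
    by_cases hv : ∃ z, Φ z = v
    · obtain ⟨⟨z, hz⟩, hzv⟩ := hv
      refine ⟨L₀ ++ z.map some, ?_, isMonoStarLine_append_map_some hnone fun c => ?_⟩
      · simp only [List.length_append, List.length_map]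
        omega
      · rw [htail c z hz, hzv]
    · push Not at hv
      classical
      set w := lineSubst L₀ default
      have hvS : v ∈ S := hχ _ ((length_lineStar_le L₀).trans (by omega))
      have hcard : (S.erase v).card ≤ k := by
        rw [Finset.card_erase_of_mem hvS]
        omega
      obtain ⟨L, hL, hmono⟩ := hN' (S.erase v) hcard (fun z => χ (w ++ z)) fun z hz => by
        refine Finset.mem_erase.2 ⟨htail default z hz ▸ hv _, hχ _ ?_⟩
        simp only [List.length_append, length_lineSubst, w]
        omega
      refine ⟨w.map some ++ L, ?_, hmono.map_some_append⟩
      simp only [List.length_append, List.length_map, length_lineSubst, w]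
      omega

theorem stmt_10_general (A : Type*) [Fintype A] [Inhabited A] (r : ℕ) :
    ∃ N : ℕ, ∀ χ : List A → Fin r,
      ∃ L : List (Option A), L.length ≤ N ∧ none ∈ L ∧
        ∃ col : Fin r,
          (∀ c : A, χ (lineSubst L c) = col) ∧ χ (lineStar L) = col := by
  obtain ⟨N, hN⟩ := exists_isMonoStarLine_of_card_le A (κ := Fin r) r
  refine ⟨N, fun χ => ?_⟩
  obtain ⟨L, hL, hnone, hmono⟩ :=
    hN Finset.univ (by simp) χ fun w _ => Finset.mem_univ (χ w)
  exact ⟨L, hL, hnone, χ (lineStar L), hmono, rfl⟩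

/-- 1-dimensional `*`-version of the Hales–Jewett theorem: for every finite
alphabet `Σ` and every `r > 0` there is `N` such that every `r`-colouring of the words of
length at most `N` admits a combinatorial line `L` of length at most `N` with
`{L(c) : c ∈ Σ} ∪ {L(*)}` monochromatic. -/
theorem stmt_10 (A : Type*) [Fintype A] [Inhabited A] (r : ℕ) (hr : 0 < r) :
    ∃ N : ℕ, ∀ χ : List A → Fin r,
      ∃ L : List (Option A), L.length ≤ N ∧ none ∈ L ∧
        ∃ col : Fin r,
          (∀ c : A, χ (lineSubst L c) = col) ∧ χ (lineStar L) = col :=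
  stmt_10_general A r
end

section
/- Let (T,⪯,Σ,S,M) be an (S,M)-tree, let F ∈ M, let X ⊆ T, and suppose F is an envelope of X, i.e., there is Y ⊆ T with F[Y] = X. Then for every set of levels I ⊆ F̃[ω], F is also an envelope of Cl_I(X), the smallest superset of X that is closed under meets and parameter-closed over I. -/
variable {T : Type*} [PartialOrder T] {A : Type*}

/-- `F` skips level `m`: `m` is not in the image of the induced level map `F̃`. -/
noncomputable def SkipsLevel (F : T → T) (m : ℕ) : Prop := ∀ a : T, lvl (F a) ≠ m

/-- `F` skips only level `m`: `F̃[ω] = ω \ {m}`, i.e. `F̃(ℓ) = ℓ` for `ℓ < m` and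
`F̃(ℓ) = ℓ + 1` for `ℓ ≥ m`. -/
noncomputable def SkipsOnly (F : T → T) (m : ℕ) : Prop :=
  ∀ a : T, lvl (F a) = if lvl a < m then lvl a else lvl a + 1

/-- `(T, ≤, A, S, M)` is an (S,M)-tree: an S-tree together with a set `M` of
shape-preserving functions satisfying (M1) `M` is a closed monoid, (M2) `M` admits
decompositions, and (M3) `M` is closed for duplication. -/
structure IsSMTree (S : T → List T → A → Option T) (M : Set (T → T)) : Prop where
  stree : IsSTree S
  shape : ∀ F ∈ M, IsShapePres S F
  -- (M1): `M` is a closed monoid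
  m1_id : (id : T → T) ∈ M
  m1_comp : ∀ F ∈ M, ∀ G ∈ M, F ∘ G ∈ M
  m1_closed : ∀ Fseq : ℕ → T → T, (∀ i, Fseq i ∈ M) →
    (∀ i : ℕ, ∀ a : T, lvl a ≤ i → Fseq i a = Fseq (i + 1) a) →
    ∃ F ∈ M, ∀ i : ℕ, ∀ a : T, lvl a ≤ i → F a = Fseq i a
  -- (M2): decompositions; `F̃(n)` is expressed via a witness `a₀` of level `n`
  m2 : ∀ F ∈ M, ∀ (n : ℕ) (a₀ : T), lvl a₀ = n → 0 < lvl (F a₀) →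
    SkipsLevel F (lvl (F a₀) - 1) →
    ∃ F₁ ∈ M, ∃ F₂ ∈ M, SkipsOnly F₂ (lvl (F a₀) - 1) ∧
      ∀ a : T, lvl a ≤ n → F₂ (F₁ a) = F a
  -- (M3): duplication functions `F^n_m`
  m3 : ∀ n m : ℕ, n < m → ∃ F ∈ M, SkipsOnly F m ∧
    ∀ (a b : T) (p : List T) (c : A) (q : T),
      lvl a = n → lvl b = m → S a p c = some q → q ≤ b → S b p c = some (F b)

/-- `X` is meet-closed. -/
def MeetClosed (X : Set T) : Prop :=
  ∀ a ∈ X, ∀ b ∈ X, ∀ m : T, IsMeetOf m a b → m ∈ X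

/-- `X` is parameter-closed over `I`: for every `i ∈ I` and `a ∈ X` of level `> i`,
every parameter of the level-`(i+1)` predecessor of `a` belongs to `X`. -/
def ParamClosed (S : T → List T → A → Option T) (I : Set ℕ) (X : Set T) : Prop :=
  ∀ i ∈ I, ∀ a ∈ X, i < lvl a →
    ∀ (q q' : T) (p : List T) (c : A), q ≤ a → lvl q = i + 1 →
      S q' p c = some q → ∀ b ∈ p, b ∈ X

/-- `Cl_I(X)`: the smallest superset of `X` that is meet-closed and parameter-closed
over `I`. -/
def Cl (S : T → List T → A → Option T) (I : Set ℕ) (X : Set T) : Set T :=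
  ⋂₀ {Z : Set T | X ⊆ Z ∧ MeetClosed Z ∧ ParamClosed S I Z}

/-! A shape-preserving `F` reflects meets, and the successor step out of `F c` towards `F a` is the
image of the step out of `c` towards `a`; so along `F a`, at every level in `F̃[ω]`, the parameters
are images too. Hence the range of `F` is meet-closed and parameter-closed over `I`, and, as it
contains `X`, it contains `Cl_I(X)`, which is then the image of its own preimage. -/

lemma lvl_lt_lvl_of_lt {a b : T} (ha : {c : T | c < a}.Finite) (h : b < a) : lvl b < lvl a :=
  Set.ncard_lt_ncard ⟨fun _ hc => lt_trans hc h, fun hsub => lt_irrefl b (hsub h)⟩ ha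

namespace IsSTree

variable {S : T → List T → A → Option T} (hS : IsSTree S)
include hS

lemma lvl_le_lvl_of_le {a b : T} (h : b ≤ a) : lvl b ≤ lvl a := by
  rcases h.eq_or_lt with rfl | h
  · rfl
  · exact (lvl_lt_lvl_of_lt (hS.pred_finite a) h).le

lemma le_of_le_of_lvl_le {a b c : T} (hb : b ≤ a) (hc : c ≤ a) (hlvl : lvl b ≤ lvl c) :
    b ≤ c := by
  rcases hb.eq_or_lt with rfl | hb'
  · rcases hc.eq_or_lt with rfl | hc'
    · rfl
    · exact absurd hlvl (lvl_lt_lvl_of_lt (hS.pred_finite b) hc').not_ge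
  rcases hc.eq_or_lt with rfl | hc'
  · exact hb
  rcases eq_or_ne b c with rfl | hne
  · rfl
  rcases hS.pred_chain a hb' hc' hne with h | h
  · exact h
  · rcases h.eq_or_lt with rfl | h
    · rfl
    · exact absurd hlvl (lvl_lt_lvl_of_lt (hS.pred_finite b) h).not_ge

lemma eq_of_le_of_lvl_eq {a b c : T} (hb : b ≤ a) (hc : c ≤ a) (hlvl : lvl b = lvl c) :
    b = c :=
  (hS.le_of_le_of_lvl_le hb hc hlvl.le).antisymm (hS.le_of_le_of_lvl_le hc hb hlvl.ge)

/-- Below `a` the level map is injective into `[0, lvl a)`, and both sets have `lvl a`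
elements. -/
lemma exists_le_lvl_eq (a : T) {j : ℕ} (hj : j ≤ lvl a) : ∃ b ≤ a, lvl b = j := by
  rcases hj.eq_or_lt with rfl | hj
  · exact ⟨a, le_rfl, rfl⟩
  have hinj : Set.InjOn lvl {b : T | b < a} := fun b hb c hc =>
    hS.eq_of_le_of_lvl_eq (le_of_lt hb) (le_of_lt hc)
  have hsub : lvl '' {b : T | b < a} ⊆ Set.Iio (lvl a) := by
    rintro _ ⟨b, hb, rfl⟩
    exact lvl_lt_lvl_of_lt (hS.pred_finite a) hb
  have himage : lvl '' {b : T | b < a} = Set.Iio (lvl a) :=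
    Set.eq_of_subset_of_ncard_le hsub (by rw [Set.ncard_Iio_nat, hinj.ncard_image]; rfl)
      (Set.finite_Iio _)
  obtain ⟨b, hb, rfl⟩ : j ∈ lvl '' {b : T | b < a} := himage ▸ hj
  exact ⟨b, le_of_lt hb, rfl⟩

lemma covBy_of_le_of_lvl_eq {a b c : T} (hb : b ≤ a) (hc : c ≤ a) (hlvl : lvl c = lvl b + 1) :
    b ⋖ c := by
  have hbc : b < c := (hS.le_of_le_of_lvl_le hb hc (by omega)).lt_of_ne (by rintro rfl; omega)
  refine ⟨hbc, fun x hbx hxc => ?_⟩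
  have h₁ := lvl_lt_lvl_of_lt (hS.pred_finite x) hbx
  have h₂ := lvl_lt_lvl_of_lt (hS.pred_finite c) hxc
  omega

lemma lvl_eq_of_covBy {a b : T} (h : a ⋖ b) : lvl b = lvl a + 1 := by
  have hlt := lvl_lt_lvl_of_lt (hS.pred_finite b) h.lt
  obtain ⟨c, hcb, hc⟩ := hS.exists_le_lvl_eq b (show lvl a + 1 ≤ lvl b by omega)
  have hac : a ⋖ c := hS.covBy_of_le_of_lvl_eq h.le hcb hc
  rcases hcb.eq_or_lt with rfl | hcb
  · exact hc
  · exact absurd hcb (h.2 hac.lt)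

lemma exists_covBy_le {a b : T} (h : a < b) : ∃ c, a ⋖ c ∧ c ≤ b := by
  have hlt := lvl_lt_lvl_of_lt (hS.pred_finite b) h
  obtain ⟨c, hcb, hc⟩ := hS.exists_le_lvl_eq b (show lvl a + 1 ≤ lvl b by omega)
  exact ⟨c, hS.covBy_of_le_of_lvl_eq h.le hcb hc, hcb⟩

lemma exists_isGreatest_lowerBounds_pair {a b c : T} (hca : c ≤ a) (hcb : c ≤ b) :
    ∃ m, IsGreatest (lowerBounds {a, b}) m := by
  have hfin : (lowerBounds {a, b}).Finite :=
    ((hS.pred_finite a).insert a).subset fun x hx => (hx (Set.mem_insert a {b})).eq_or_lt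
  obtain ⟨m, hm, hmax⟩ := Set.exists_max_image _ lvl hfin ⟨c, by simp [hca, hcb]⟩
  exact ⟨m, hm, fun x hx =>
    hS.le_of_le_of_lvl_le (hx (Set.mem_insert a {b})) (hm (Set.mem_insert a {b})) (hmax x hx)⟩

end IsSTree

lemma IsGreatest.isMeetOf_of_lowerBounds_pair {a b m : T}
    (hm : IsGreatest (lowerBounds {a, b}) m) : IsMeetOf m a b :=
  ⟨hm.1 (by simp), hm.1 (by simp), fun c hmc hca hcb =>
    (hm.2 (by simp [hca, hcb])).antisymm hmc⟩

lemma cl_subset {S : T → List T → A → Option T} {I : Set ℕ} {X Z : Set T} (hXZ : X ⊆ Z)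
    (hmeet : MeetClosed Z) (hparam : ParamClosed S I Z) : Cl S I X ⊆ Z :=
  Set.sInter_subset_of_mem ⟨hXZ, hmeet, hparam⟩

namespace IsShapePres

variable {S : T → List T → A → Option T} {F : T → T} (hS : IsSTree S) (hF : IsShapePres S F)
include hS hF

lemma exists_S_map {c a : T} (h : c ⋖ a) : ∃ (p : List T) (k : A) (q : T),
    S c p k = some a ∧ S (F c) (p.map F) k = some q ∧ F c ⋖ q ∧ q ≤ F a := by
  obtain ⟨p, k, hs⟩ := hS.s3 c a h
  obtain ⟨q, hq, hqa⟩ := hF.weak_S c p k a hs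
  exact ⟨p, k, q, hs, hq, hS.s1_cov _ _ _ _ hq, hqa⟩

lemma map_le_map {a b : T} (hab : a ≤ b) : F a ≤ F b := by
  rcases hab.eq_or_lt with rfl | hlt
  · rfl
  obtain ⟨c, hac, hcb⟩ := hS.exists_covBy_le hlt
  obtain ⟨-, -, q, -, -, hq, hqc⟩ := hF.exists_S_map hS hac
  exact hq.le.trans (hqc.trans (map_le_map hcb))
termination_by lvl b - lvl a
decreasing_by
  have := hS.lvl_eq_of_covBy hac
  have := hS.lvl_le_lvl_of_le hcb
  have := lvl_lt_lvl_of_lt (hS.pred_finite b) hlt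
  omega

lemma lvl_map_le_lvl_map {a b : T} (h : lvl a ≤ lvl b) : lvl (F a) ≤ lvl (F b) := by
  obtain ⟨b', hb', hlvl⟩ := hS.exists_le_lvl_eq b h
  rw [← hF.lvl_pres b' a hlvl]
  exact hS.lvl_le_lvl_of_le (hF.map_le_map hS hb')

/-- `F` reflects branching: the successor steps out of `F c` towards `F a` and `F b` are the
images of those out of `c`, and `S`-values determine their arguments. -/
lemma exists_lt_le_le_of_lt_map {a b c d : T} (hca : c < a) (hcb : c < b) (hcd : F c < d)
    (hda : d ≤ F a) (hdb : d ≤ F b) : ∃ e, c < e ∧ e ≤ a ∧ e ≤ b := by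
  obtain ⟨a₁, hca₁, ha₁a⟩ := hS.exists_covBy_le hca
  obtain ⟨b₁, hcb₁, hb₁b⟩ := hS.exists_covBy_le hcb
  obtain ⟨p, k, qa, hsa, hqa, hcqa, hqa₁⟩ := hF.exists_S_map hS hca₁
  obtain ⟨p', k', qb, hsb, hqb, hcqb, hqb₁⟩ := hF.exists_S_map hS hcb₁
  have hlvl := lvl_lt_lvl_of_lt (hS.pred_finite d) hcd
  obtain ⟨e, hed, he⟩ := hS.exists_le_lvl_eq d (show lvl (F c) + 1 ≤ lvl d by omega)
  have hqa_eq : qa = e := hS.eq_of_le_of_lvl_eq (hqa₁.trans (hF.map_le_map hS ha₁a))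
    (hed.trans hda) (by rw [hS.lvl_eq_of_covBy hcqa, he])
  have hqb_eq : qb = e := hS.eq_of_le_of_lvl_eq (hqb₁.trans (hF.map_le_map hS hb₁b))
    (hed.trans hdb) (by rw [hS.lvl_eq_of_covBy hcqb, he])
  subst hqa_eq hqb_eq
  obtain ⟨-, hpp', rfl⟩ := hS.s2 _ _ _ _ _ _ _ hqa hqb
  obtain rfl := List.map_injective_iff.mpr hF.inj hpp'
  obtain rfl : a₁ = b₁ := Option.some.inj (hsa.symm.trans hsb)
  exact ⟨a₁, hca₁.lt, ha₁a, hb₁b⟩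

/-- Level-`0` predecessors are fixed by `F`, so `F a` and `F b` share one only if `a` and `b`
do. -/
lemma exists_le_le_of_le_map {a b d : T} (hda : d ≤ F a) (hdb : d ≤ F b) :
    ∃ c, c ≤ a ∧ c ≤ b := by
  obtain ⟨r, hrd, hr⟩ := hS.exists_le_lvl_eq d (Nat.zero_le _)
  obtain ⟨ra, hra, hra0⟩ := hS.exists_le_lvl_eq a (Nat.zero_le _)
  obtain ⟨rb, hrb, hrb0⟩ := hS.exists_le_lvl_eq b (Nat.zero_le _)
  have hra_eq : ra = r :=
    hS.eq_of_le_of_lvl_eq (hF.root ra a hra0 hra) (hrd.trans hda) (hra0.trans hr.symm)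
  have hrb_eq : rb = r :=
    hS.eq_of_le_of_lvl_eq (hF.root rb b hrb0 hrb) (hrd.trans hdb) (hrb0.trans hr.symm)
  exact ⟨r, hra_eq ▸ hra, hrb_eq ▸ hrb⟩

lemma exists_isMeetOf_of_isMeetOf_map {a b m : T} (hm : IsMeetOf m (F a) (F b)) :
    ∃ m', IsMeetOf m' a b ∧ F m' = m := by
  obtain ⟨hma, hmb, hmax⟩ := hm
  obtain ⟨c, hca, hcb⟩ := hF.exists_le_le_of_le_map hS hma hmb
  obtain ⟨m', hm'⟩ := hS.exists_isGreatest_lowerBounds_pair hca hcb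
  have hm'a : m' ≤ a := hm'.1 (by simp)
  have hm'b : m' ≤ b := hm'.1 (by simp)
  refine ⟨m', hm'.isMeetOf_of_lowerBounds_pair, ?_⟩
  have hFa := hF.map_le_map hS hm'a
  have hFb := hF.map_le_map hS hm'b
  by_cases hlvl : lvl m ≤ lvl (F m')
  · exact hmax _ (hS.le_of_le_of_lvl_le hma hFa hlvl) hFa hFb
  have hlt : F m' < m := (hS.le_of_le_of_lvl_le hFa hma (by omega)).lt_of_ne (by rintro rfl; omega)
  have hm'a' : m' < a := hm'a.lt_of_ne (by rintro rfl; exact (hlt.trans_le hma).false)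
  have hm'b' : m' < b := hm'b.lt_of_ne (by rintro rfl; exact (hlt.trans_le hmb).false)
  obtain ⟨e, hm'e, hea, heb⟩ := hF.exists_lt_le_le_of_lt_map hS hm'a' hm'b' hlt hma hmb
  exact absurd (hm'.2 (by simp [hea, heb])) hm'e.not_ge

lemma meetClosed_range : MeetClosed (Set.range F) := by
  rintro _ ⟨a, rfl⟩ _ ⟨b, rfl⟩ m hm
  obtain ⟨m', -, rfl⟩ := hF.exists_isMeetOf_of_isMeetOf_map hS hm
  exact ⟨m', rfl⟩

/-- The level-`(i+1)` node below `F a` is reached from the image of the level-`j` node below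
`a`, where `F̃(j) = i`, by the image of an `S`-step, whose parameters are images. -/
lemma paramClosed_range {I : Set ℕ} (hI : ∀ i ∈ I, ∃ a, lvl (F a) = i) :
    ParamClosed S I (Set.range F) := by
  rintro i hi _ ⟨a, rfl⟩ hia q q' p k hqa hq hs b hb
  obtain ⟨x, rfl⟩ := hI i hi
  have hxa : lvl x < lvl a := lt_of_not_ge fun h => (hF.lvl_map_le_lvl_map hS h).not_gt hia
  obtain ⟨a₀, ha₀a, ha₀⟩ := hS.exists_le_lvl_eq a hxa.le
  obtain ⟨a₁, ha₁a, ha₁⟩ := hS.exists_le_lvl_eq a (show lvl x + 1 ≤ lvl a by omega)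
  obtain ⟨p₀, k₀, q₀, -, hs₀, hq₀, hq₀a₁⟩ :=
    hF.exists_S_map hS (hS.covBy_of_le_of_lvl_eq ha₀a ha₁a (by omega))
  obtain rfl : q₀ = q := hS.eq_of_le_of_lvl_eq (hq₀a₁.trans (hF.map_le_map hS ha₁a)) hqa
    (by rw [hS.lvl_eq_of_covBy hq₀, hF.lvl_pres a₀ x ha₀, hq])
  obtain ⟨-, rfl, -⟩ := hS.s2 _ _ _ _ _ _ _ hs hs₀
  obtain ⟨b₀, -, rfl⟩ := List.mem_map.mp hb
  exact ⟨b₀, rfl⟩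

end IsShapePres

/-- in an (S,M)-tree, if `F ∈ M` is an envelope of `X` (i.e. `F[Y] = X` for
some `Y`), then for every set of levels `I` contained in the image of the level map `F̃`,
`F` is also an envelope of `Cl_I(X)`. -/
theorem stmt_14 (S : T → List T → A → Option T) (M : Set (T → T))
    (h : IsSMTree S M) (F : T → T) (hF : F ∈ M)
    (X : Set T) (henv : ∃ Y : Set T, F '' Y = X)
    (I : Set ℕ) (hI : ∀ i ∈ I, ∃ a : T, lvl (F a) = i) :
    ∃ Y : Set T, F '' Y = Cl S I X := by
  obtain ⟨Y, rfl⟩ := henv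
  have hS := h.stree
  have hFS := h.shape F hF
  have hcl : Cl S I (F '' Y) ⊆ Set.range F :=
    cl_subset (Set.image_subset_range F Y) (hFS.meetClosed_range hS) (hFS.paramClosed_range hS hI)
  exact ⟨F ⁻¹' Cl S I (F '' Y), Set.image_preimage_eq_of_subset hcl⟩
end

section
/- Let Σ be a finite alphabet with at least two elements, and let F : Σ^{<ω} → Σ^{<ω} be a shape-preserving function lying in the monoid M_{E^CS} (that is, for every level ℓ skipped by F there exists a unique earlier level n ∈ F̃[ω] such that for every word a with |F(a)| > ℓ, the letter of F(a) at index ℓ equals the letter of F(a) at index n). Define a relation E_F on ω by declaring ℓ ∼ ℓ′ if ℓ, ℓ′ are skipped by F and associated with the same level n ∈ F̃[ω], or if one of them lies in F̃[ω] and is the level associated with the other, or ℓ = ℓ′. Then E_F is an equivalence relation on ω each of whose classes has its minimal element in F̃[ω], and the assignment F ↦ E_F is a bijection between M_{E^CS} and the set of equivalence relations on ω all of whose classes have their minimum in the image of the corresponding level map. -/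
/-- `F : Σ^{<ω} → Σ^{<ω}` is level-preserving. -/
def LevelPres {A : Type*} (F : List A → List A) : Prop :=
  ∀ a b : List A, a.length = b.length → (F a).length = (F b).length

/-- `F` preserves passing numbers (the induced level map `F̃` is represented via a witness
`b` of length `ℓ`: `F̃(ℓ) = |F b|`). -/
def PassingPres {A : Type*} [Inhabited A] (F : List A → List A) : Prop :=
  ∀ (a : List A) (ℓ : ℕ), ℓ < a.length → ∀ b : List A, b.length = ℓ →
    (F b).length < (F a).length ∧ (F a).getD (F b).length default = a.getD ℓ default

/-- A shape-preserving function of the tree `(Σ^{<ω}, ⊑)`. -/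
def ShapePresW {A : Type*} [Inhabited A] (F : List A → List A) : Prop :=
  Function.Injective F ∧ LevelPres F ∧ PassingPres F

/-- The image `F̃[ω]` of the induced level map of `F`: the set of levels not skipped. -/
def lvlImage {A : Type*} (F : List A → List A) : Set ℕ :=
  {ℓ : ℕ | ∃ b : List A, (F b).length = ℓ}

/-- `n` is the (earlier, non-skipped) level associated to the level `ℓ`: `n ∈ F̃[ω]`,
`n < ℓ`, and for every word `a` with `|F a| > ℓ`, the letter of `F a` at index `ℓ`
equals its letter at index `n`. -/
def Assoc {A : Type*} [Inhabited A] (F : List A → List A) (ℓ n : ℕ) : Prop :=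
  n ∈ lvlImage F ∧ n < ℓ ∧
    ∀ a : List A, ℓ < (F a).length → (F a).getD ℓ default = (F a).getD n default

/-- The monoid `M_{E^CS}`: shape-preserving functions such that every skipped level has a
unique associated earlier non-skipped level which it copies. -/
def MCS (A : Type*) [Inhabited A] : Set (List A → List A) :=
  {F | ShapePresW F ∧ ∀ ℓ : ℕ, ℓ ∉ lvlImage F → ∃! n : ℕ, Assoc F ℓ n}

/-- The relation `E_F` on `ω`: `ℓ ∼ ℓ'` iff `ℓ = ℓ'`, or both are skipped and have the same
associated level, or one lies in `F̃[ω]` and is the level associated to the other. -/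
def EF {A : Type*} [Inhabited A] (F : List A → List A) (ℓ ℓ' : ℕ) : Prop :=
  ℓ = ℓ' ∨
  (ℓ ∉ lvlImage F ∧ ℓ' ∉ lvlImage F ∧ ∃ n : ℕ, Assoc F ℓ n ∧ Assoc F ℓ' n) ∨
  (ℓ ∈ lvlImage F ∧ Assoc F ℓ' ℓ) ∨
  (ℓ' ∈ lvlImage F ∧ Assoc F ℓ ℓ')

/-! A map `F ∈ M_{E^CS}` is determined by its representative map `rep F`, sending a level
to itself if it is not skipped and to its associated level otherwise: the letter of `F a` at
level `m` is the letter of `a` at the position `j` with `F̃ j = rep F m`. Conversely, every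
idempotent `r ≤ id` with infinitely many fixed points is `rep F` for the map `ofRep r` that
reads its letters this way, enumerating the fixed points with `Nat.nth`. Over an alphabet
with at least two letters the associated level is forced (two distinct non-skipped levels
can carry different letters), so `E_F` is the kernel of `rep F`, and
`E ↦ ofRep (classMin E)` inverts `F ↦ E_F`. -/

lemma StrictMono.nth_mem_range {f : ℕ → ℕ} (hf : StrictMono f) :
    Nat.nth (· ∈ Set.range f) = f := by
  funext n
  have := Nat.nth_comp_of_strictMono (p := (· ∈ Set.range f)) (n := n) hf (fun _ h => h)
    (fun hfi => absurd hfi (Set.infinite_range_of_injective hf.injective))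
  simpa using this.symm

lemma List.getD_set_replicate {α : Type*} {n i j : ℕ} (hj : j < n) (x y d : α) :
    ((List.replicate n x).set i y).getD j d = if i = j then y else x := by
  rw [List.getD_eq_getElem _ _ (by simpa using hj), List.getElem_set, List.getElem_replicate]

section

variable {A : Type*} [Inhabited A] {F : List A → List A}

/-- The level map `F̃`. -/
noncomputable def levelMap (F : List A → List A) (k : ℕ) : ℕ :=
  (F (List.replicate k default)).length

lemma LevelPres.length_eq (hF : LevelPres F) (a : List A) :
    (F a).length = levelMap F a.length :=
  hF a _ (by simp)

namespace ShapePresW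

variable (hF : ShapePresW F)
include hF

lemma strictMono_levelMap : StrictMono (levelMap F) := fun j k hjk => by
  simpa [levelMap] using (hF.2.2 (List.replicate k default) j (by simpa)
    (List.replicate j default) (by simp)).1

lemma getD_levelMap (a : List A) {j : ℕ} (hj : j < a.length) :
    (F a).getD (levelMap F j) default = a.getD j default :=
  (hF.2.2 a j hj (List.replicate j default) (by simp)).2

lemma lvlImage_eq : lvlImage F = Set.range (levelMap F) := by
  ext ℓ
  constructor
  · rintro ⟨b, rfl⟩
    exact ⟨b.length, (hF.2.1.length_eq b).symm⟩
  · rintro ⟨k, rfl⟩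
    exact ⟨List.replicate k default, rfl⟩

lemma exists_getD_ne [Nontrivial A] {p q : ℕ} (hpq : p ≠ q) (ℓ : ℕ) :
    ∃ a : List A, ℓ < (F a).length ∧
      (F a).getD (levelMap F p) default ≠ (F a).getD (levelMap F q) default := by
  obtain ⟨x, y, hxy⟩ := exists_pair_ne A
  refine ⟨(List.replicate (p + q + ℓ + 1) x).set p y, ?_, ?_⟩
  · rw [hF.2.1.length_eq, List.length_set, List.length_replicate]
    exact (show ℓ < p + q + ℓ + 1 by omega).trans_le (hF.strictMono_levelMap.id_le _)
  · rw [hF.getD_levelMap _ (by simp; omega), hF.getD_levelMap _ (by simp; omega),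
      List.getD_set_replicate (by omega), List.getD_set_replicate (by omega), if_pos rfl,
      if_neg hpq]
    exact hxy.symm

lemma not_assoc_of_mem [Nontrivial A] {ℓ n : ℕ} (hℓ : ℓ ∈ lvlImage F) : ¬ Assoc F ℓ n := by
  rintro ⟨hn, hnℓ, hcopy⟩
  rw [hF.lvlImage_eq] at hℓ hn
  obtain ⟨k, rfl⟩ := hℓ
  obtain ⟨j, rfl⟩ := hn
  obtain ⟨a, ha, hne⟩ := hF.exists_getD_ne (ne_of_lt (hF.strictMono_levelMap.lt_iff_lt.mp hnℓ))
    (levelMap F k)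
  exact hne (hcopy a ha).symm

lemma assoc_unique [Nontrivial A] {ℓ n n' : ℕ} (h : Assoc F ℓ n) (h' : Assoc F ℓ n') :
    n = n' := by
  obtain ⟨hn, -, hcopy⟩ := h
  obtain ⟨hn', -, hcopy'⟩ := h'
  rw [hF.lvlImage_eq] at hn hn'
  obtain ⟨j, rfl⟩ := hn
  obtain ⟨j', rfl⟩ := hn'
  by_contra hne
  obtain ⟨a, ha, hdiff⟩ := hF.exists_getD_ne (fun h => hne (congrArg _ h)) ℓ
  exact hdiff ((hcopy a ha).symm.trans (hcopy' a ha))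

end ShapePresW

open Classical in
noncomputable def rep (F : List A → List A) (ℓ : ℕ) : ℕ :=
  if h : ∃ n, Assoc F ℓ n then h.choose else ℓ

lemma rep_le (F : List A → List A) (ℓ : ℕ) : rep F ℓ ≤ ℓ := by
  unfold rep
  split_ifs with h
  · exact h.choose_spec.2.1.le
  · exact le_rfl

lemma rep_eq_of_assoc [Nontrivial A] (hF : ShapePresW F) {ℓ n : ℕ} (h : Assoc F ℓ n) :
    rep F ℓ = n := by
  have hex : ∃ n, Assoc F ℓ n := ⟨n, h⟩
  rw [rep, dif_pos hex]
  exact hF.assoc_unique hex.choose_spec h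

lemma rep_eq_self_of_mem [Nontrivial A] (hF : ShapePresW F) {ℓ : ℕ} (h : ℓ ∈ lvlImage F) :
    rep F ℓ = ℓ := by
  rw [rep, dif_neg fun ⟨_, hn⟩ => hF.not_assoc_of_mem h hn]

lemma assoc_rep (hF : F ∈ MCS A) {ℓ : ℕ} (h : ℓ ∉ lvlImage F) : Assoc F ℓ (rep F ℓ) := by
  have hex : ∃ n, Assoc F ℓ n := (hF.2 ℓ h).exists
  rw [rep, dif_pos hex]
  exact hex.choose_spec

lemma rep_mem_lvlImage (hF : F ∈ MCS A) (ℓ : ℕ) : rep F ℓ ∈ lvlImage F := by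
  unfold rep
  split_ifs with h
  · exact h.choose_spec.1
  · by_contra hℓ
    exact h (hF.2 ℓ hℓ).exists

lemma getD_rep (F : List A → List A) (a : List A) {m : ℕ} (hm : m < (F a).length) :
    (F a).getD (rep F m) default = (F a).getD m default := by
  unfold rep
  split_ifs with h
  · exact (h.choose_spec.2.2 a hm).symm
  · rfl

lemma rep_eq_self_iff [Nontrivial A] (hF : F ∈ MCS A) {ℓ : ℕ} :
    rep F ℓ = ℓ ↔ ℓ ∈ lvlImage F :=
  ⟨fun h => h ▸ rep_mem_lvlImage hF ℓ, rep_eq_self_of_mem hF.1⟩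

lemma rep_rep [Nontrivial A] (hF : F ∈ MCS A) (ℓ : ℕ) : rep F (rep F ℓ) = rep F ℓ :=
  rep_eq_self_of_mem hF.1 (rep_mem_lvlImage hF ℓ)

lemma EF_iff_rep_eq [Nontrivial A] (hF : F ∈ MCS A) {ℓ ℓ' : ℕ} :
    EF F ℓ ℓ' ↔ rep F ℓ = rep F ℓ' := by
  have hself := fun {k} (hk : k ∈ lvlImage F) => rep_eq_self_of_mem hF.1 hk
  constructor
  · rintro (rfl | ⟨-, -, n, hn, hn'⟩ | ⟨hℓ, h⟩ | ⟨hℓ', h⟩)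
    · rfl
    · rw [rep_eq_of_assoc hF.1 hn, rep_eq_of_assoc hF.1 hn']
    · rw [hself hℓ, rep_eq_of_assoc hF.1 h]
    · rw [rep_eq_of_assoc hF.1 h, hself hℓ']
  · intro h
    by_cases hℓ : ℓ ∈ lvlImage F <;> by_cases hℓ' : ℓ' ∈ lvlImage F
    · exact Or.inl (by rwa [hself hℓ, hself hℓ'] at h)
    · exact Or.inr <| Or.inr <| Or.inl ⟨hℓ, by simpa [← h, hself hℓ] using assoc_rep hF hℓ'⟩
    · exact Or.inr <| Or.inr <| Or.inr ⟨hℓ', by simpa [h, hself hℓ'] using assoc_rep hF hℓ⟩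
    · exact Or.inr <| Or.inl ⟨hℓ, hℓ', rep F ℓ, assoc_rep hF hℓ, h ▸ assoc_rep hF hℓ'⟩

lemma equivalence_EF [Nontrivial A] (hF : F ∈ MCS A) : Equivalence (EF F) := by
  have : EF F = fun ℓ ℓ' => rep F ℓ = rep F ℓ' := by
    ext ℓ ℓ'
    exact EF_iff_rep_eq hF
  exact this ▸ eq_equivalence.comap (rep F)

lemma EF_rep [Nontrivial A] (hF : F ∈ MCS A) (ℓ : ℕ) : EF F ℓ (rep F ℓ) :=
  (EF_iff_rep_eq hF).2 (rep_rep hF ℓ).symm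

lemma rep_le_of_EF [Nontrivial A] (hF : F ∈ MCS A) {ℓ k : ℕ} (h : EF F ℓ k) : rep F ℓ ≤ k :=
  (EF_iff_rep_eq hF).1 h ▸ rep_le F k

lemma rep_eq_of_forall_EF_iff [Nontrivial A] {G : List A → List A} (hF : F ∈ MCS A)
    (hG : G ∈ MCS A) (h : ∀ ℓ ℓ' : ℕ, EF F ℓ ℓ' ↔ EF G ℓ ℓ') : rep F = rep G :=
  funext fun ℓ => le_antisymm (rep_le_of_EF hF ((h _ _).2 (EF_rep hG ℓ)))
    (rep_le_of_EF hG ((h _ _).1 (EF_rep hF ℓ)))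

section OfRep

variable {r : ℕ → ℕ}

noncomputable def ofRep (r : ℕ → ℕ) (a : List A) : List A :=
  (List.range (Nat.nth (fun m => r m = m) a.length)).map fun m =>
    a.getD (Nat.count (fun m => r m = m) (r m)) default

lemma length_ofRep (a : List A) : (ofRep r a).length = Nat.nth (fun m => r m = m) a.length := by
  simp [ofRep]

lemma getD_ofRep (a : List A) {m : ℕ} (hm : m < Nat.nth (fun m => r m = m) a.length) :
    (ofRep r a).getD m default = a.getD (Nat.count (fun m => r m = m) (r m)) default := by
  rw [List.getD_eq_getElem _ _ (by rwa [length_ofRep])]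
  simp [ofRep]

lemma levelMap_ofRep : levelMap (ofRep (A := A) r) = Nat.nth (fun m => r m = m) := by
  funext k
  simp [levelMap, length_ofRep]

variable (hinf : {m | r m = m}.Infinite)
include hinf

lemma getD_ofRep_nth (a : List A) {j : ℕ} (hj : j < a.length) :
    (ofRep r a).getD (Nat.nth (fun m => r m = m) j) default = a.getD j default := by
  rw [getD_ofRep a ((Nat.nth_lt_nth hinf).2 hj), Nat.nth_mem_of_infinite hinf j,
    Nat.count_nth_of_infinite hinf]

lemma shapePresW_ofRep : ShapePresW (ofRep (A := A) r) := by
  refine ⟨fun a b hab => ?_, fun a b hab => by rw [length_ofRep, length_ofRep, hab],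
    fun a j hj b hb => ?_⟩
  · have hlen : a.length = b.length := by
      have := congrArg List.length hab
      rw [length_ofRep, length_ofRep] at this
      exact Nat.nth_injective hinf this
    refine List.ext_getElem hlen fun j ha hb => ?_
    rw [← List.getD_eq_getElem _ default ha, ← List.getD_eq_getElem _ default hb,
      ← getD_ofRep_nth hinf a ha, ← getD_ofRep_nth hinf b hb, hab]
  · rw [length_ofRep, length_ofRep, hb]
    exact ⟨(Nat.nth_lt_nth hinf).2 hj, getD_ofRep_nth hinf a hj⟩

lemma lvlImage_ofRep : lvlImage (ofRep (A := A) r) = {m | r m = m} := by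
  rw [(shapePresW_ofRep hinf).lvlImage_eq, levelMap_ofRep, Nat.range_nth_of_infinite hinf]

lemma assoc_ofRep (hidem : ∀ m, r (r m) = r m) (hle : ∀ m, r m ≤ m) {ℓ : ℕ} (hℓ : r ℓ ≠ ℓ) :
    Assoc (ofRep (A := A) r) ℓ (r ℓ) := by
  refine ⟨by rw [lvlImage_ofRep hinf]; exact hidem ℓ, lt_of_le_of_ne (hle ℓ) hℓ,
    fun a ha => ?_⟩
  rw [length_ofRep] at ha
  rw [getD_ofRep a ha, getD_ofRep a ((hle ℓ).trans_lt ha), hidem]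

lemma ofRep_mem_MCS [Nontrivial A] (hidem : ∀ m, r (r m) = r m) (hle : ∀ m, r m ≤ m) :
    ofRep (A := A) r ∈ MCS A := by
  refine ⟨shapePresW_ofRep hinf, fun ℓ hℓ => ?_⟩
  rw [lvlImage_ofRep hinf] at hℓ
  exact ⟨r ℓ, assoc_ofRep hinf hidem hle hℓ, fun n hn =>
    (shapePresW_ofRep hinf).assoc_unique hn (assoc_ofRep hinf hidem hle hℓ)⟩

lemma rep_ofRep [Nontrivial A] (hidem : ∀ m, r (r m) = r m) (hle : ∀ m, r m ≤ m) :
    rep (ofRep (A := A) r) = r := by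
  funext ℓ
  by_cases hℓ : r ℓ = ℓ
  · rw [hℓ, rep_eq_self_of_mem (shapePresW_ofRep hinf) (by rw [lvlImage_ofRep hinf]; exact hℓ)]
  · exact rep_eq_of_assoc (shapePresW_ofRep hinf) (assoc_ofRep hinf hidem hle hℓ)

end OfRep

lemma eq_ofRep_rep [Nontrivial A] (hF : F ∈ MCS A) : F = ofRep (rep F) := by
  have hfix : {m | rep F m = m} = Set.range (levelMap F) := by
    ext m
    exact (rep_eq_self_iff hF).trans (Set.ext_iff.1 hF.1.lvlImage_eq m)
  have hinf : {m | rep F m = m}.Infinite :=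
    hfix ▸ Set.infinite_range_of_injective hF.1.strictMono_levelMap.injective
  have hnth : Nat.nth (fun m => rep F m = m) = levelMap F := by
    rw [← hF.1.strictMono_levelMap.nth_mem_range, ← hfix]
    rfl
  funext a
  have hlen : (F a).length = (ofRep (rep F) a).length := by
    rw [length_ofRep, hnth, hF.1.2.1.length_eq]
  refine List.ext_getElem hlen fun m h₁ h₂ => ?_
  rw [← List.getD_eq_getElem _ default h₁, ← List.getD_eq_getElem _ default h₂,
    getD_ofRep a (by rwa [length_ofRep] at h₂), ← getD_rep F a h₁]
  obtain ⟨j, hj⟩ : rep F m ∈ Set.range (levelMap F) := hF.1.lvlImage_eq ▸ rep_mem_lvlImage hF m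
  have hja : j < a.length := by
    rw [hF.1.2.1.length_eq] at h₁
    exact hF.1.strictMono_levelMap.lt_iff_lt.1 (hj ▸ (rep_le F m).trans_lt h₁)
  rw [← hj, hF.1.getD_levelMap a hja, ← hnth, Nat.count_nth_of_infinite hinf]

end

section ClassMin

variable {E : ℕ → ℕ → Prop}

noncomputable def classMin (E : ℕ → ℕ → Prop) (ℓ : ℕ) : ℕ :=
  sInf {k | E ℓ k}

lemma rel_classMin (hE : Equivalence E) (ℓ : ℕ) : E ℓ (classMin E ℓ) :=
  Nat.sInf_mem ⟨ℓ, hE.refl ℓ⟩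

lemma classMin_le_of_rel {ℓ k : ℕ} (h : E ℓ k) : classMin E ℓ ≤ k :=
  Nat.sInf_le h

lemma classMin_le (hE : Equivalence E) (ℓ : ℕ) : classMin E ℓ ≤ ℓ :=
  classMin_le_of_rel (hE.refl ℓ)

lemma classMin_eq_classMin_iff (hE : Equivalence E) {ℓ ℓ' : ℕ} :
    classMin E ℓ = classMin E ℓ' ↔ E ℓ ℓ' := by
  refine ⟨fun h => hE.trans (rel_classMin hE ℓ) (hE.symm (h ▸ rel_classMin hE ℓ')), fun h => ?_⟩
  exact congrArg sInf (Set.ext fun k => ⟨hE.trans (hE.symm h), hE.trans h⟩)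

lemma classMin_classMin (hE : Equivalence E) (ℓ : ℕ) : classMin E (classMin E ℓ) = classMin E ℓ :=
  (classMin_eq_classMin_iff hE).2 (hE.symm (rel_classMin hE ℓ))

lemma classMin_eq_self_iff (hE : Equivalence E) {n : ℕ} :
    classMin E n = n ↔ ∀ k, E n k → n ≤ k :=
  ⟨fun h _ hk => h ▸ classMin_le_of_rel hk,
    fun h => le_antisymm (classMin_le hE n) (h _ (rel_classMin hE n))⟩

end ClassMin

/-- for a finite alphabet `Σ` with at least two elements and `F ∈ M_{E^CS}`,
the relation `E_F` is an equivalence relation on `ω` each of whose classes has its minimal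
element in `F̃[ω]`; moreover `F ↦ E_F` is a bijection between `M_{E^CS}` and the
equivalence relations on `ω` all of whose classes have their minimum in the image of the
corresponding level map (equivalently, with infinitely many classes). -/
theorem stmt_15 (A : Type*) [Fintype A] [Inhabited A] (hA : 2 ≤ Fintype.card A) :
    (∀ F ∈ MCS A, Equivalence (EF F) ∧
      ∀ ℓ : ℕ, ∃ n : ℕ, EF F ℓ n ∧ n ∈ lvlImage F ∧ ∀ k : ℕ, EF F ℓ k → n ≤ k) ∧
    (∀ F ∈ MCS A, ∀ G ∈ MCS A, (∀ ℓ ℓ' : ℕ, EF F ℓ ℓ' ↔ EF G ℓ ℓ') → F = G) ∧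
    (∀ E : ℕ → ℕ → Prop, Equivalence E →
      {n : ℕ | ∀ k : ℕ, E n k → n ≤ k}.Infinite →
      ∃ F ∈ MCS A, ∀ ℓ ℓ' : ℕ, EF F ℓ ℓ' ↔ E ℓ ℓ') := by
  have : Nontrivial A := Fintype.one_lt_card_iff_nontrivial.1 hA
  refine ⟨fun F hF => ⟨equivalence_EF hF, fun ℓ => ⟨rep F ℓ, EF_rep hF ℓ,
    rep_mem_lvlImage hF ℓ, fun _ => rep_le_of_EF hF⟩⟩, fun F hF G hG h => ?_,
    fun E hE hmin => ?_⟩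
  · calc F = ofRep (rep F) := eq_ofRep_rep hF
      _ = ofRep (rep G) := by rw [rep_eq_of_forall_EF_iff hF hG h]
      _ = G := (eq_ofRep_rep hG).symm
  · have hinf : {m | classMin E m = m}.Infinite := by
      simpa only [classMin_eq_self_iff hE] using hmin
    have hF := ofRep_mem_MCS (A := A) hinf (classMin_classMin hE) (classMin_le hE)
    refine ⟨ofRep (classMin E), hF, fun ℓ ℓ' => ?_⟩
    rw [EF_iff_rep_eq hF, rep_ofRep hinf (classMin_classMin hE) (classMin_le hE),
      classMin_eq_classMin_iff hE]
end

section
/- Let L be a relational language, B a finite ordered L-structure with vertex set n = {0,…,n−1} ordered naturally, N = 2^n − 1, and enumerate the nonempty substructures of B as B^0, …, B^{N−1} in the order ≺ (first by size, then lexicographically by vertex set). For each i let D^i be the lexicographically first substructure of B isomorphic to B^i and f^i : B^i → D^i the unique isomorphism. Define φ : n → (n+1)^N by φ(v)_i = f^i(v) if v ∈ B^i and φ(v)_i = n otherwise. Then for every v < w in B, the word φ(v) is strictly lexicographically smaller than φ(w). -/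
open FirstOrder FirstOrder.Language

/-- Lexicographic comparison of subsets of `Fin n` via their increasing enumerations. -/
def FLex {n : ℕ} (s t : Finset (Fin n)) : Prop :=
  List.Lex (· < ·) (s.sort (· ≤ ·)) (t.sort (· ≤ ·))

/-- The order `≺` on substructures (identified with their vertex sets): first by size,
then lexicographically by vertex set. -/
def Prec {n : ℕ} (s t : Finset (Fin n)) : Prop :=
  s.card < t.card ∨ (s.card = t.card ∧ FLex s t)

/-- `g` is an isomorphism from the substructure of `B` induced on `s` to the substructure
induced on `t`: a bijection `s → t` preserving all relations of `L` in both directions. -/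
def IsIsoOn (L : Language) {n : ℕ} [L.Structure (Fin n)]
    (s t : Finset (Fin n)) (g : Fin n → Fin n) : Prop :=
  Set.BijOn g ↑s ↑t ∧
  ∀ (k : ℕ) (R : L.Relations k) (x : Fin k → Fin n),
    (∀ i : Fin k, x i ∈ s) → (Structure.RelMap R x ↔ Structure.RelMap R (g ∘ x))

/-!
Let `i` be the index of the singleton `{v}`. Every substructure preceding `{v}` in `≺` is
empty or a singleton `{u}` with `u < v`, so it contains neither `v` nor `w`, and both words
read `n` there. At `i` itself `φ(v)` has a vertex, which is `< n`, while `φ(w)` has `n`.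
-/

theorem fLex_singleton_iff {n : ℕ} {u v : Fin n} : FLex {u} {v} ↔ u < v := by
  simp only [FLex, Finset.sort_singleton, List.lex_singleton_iff]

theorem Prec.lt_of_mem_of_singleton {n : ℕ} {s : Finset (Fin n)} {v : Fin n}
    (h : Prec s {v}) {u : Fin n} (hu : u ∈ s) : u < v := by
  rw [Prec, Finset.card_singleton] at h
  rcases h with hcard | ⟨hcard, hlex⟩
  · exact absurd (Finset.card_pos.mpr ⟨u, hu⟩) (by omega)
  · obtain ⟨a, rfl⟩ := Finset.card_eq_one.mp hcard
    rw [Finset.mem_singleton.mp hu]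
    exact fLex_singleton_iff.mp hlex

theorem stmt_16_general (n : ℕ)
    (N : ℕ)
    (E : Fin N → Finset (Fin n))
    (hEsurj : ∀ s : Finset (Fin n), s.Nonempty → ∃ i : Fin N, E i = s)
    (hEmono : ∀ i j : Fin N, i < j → Prec (E i) (E j))
    (g : Fin N → Fin n → Fin n) :
    ∀ v w : Fin n, v < w →
      ∃ i : Fin N,
        (∀ j : Fin N, j < i →
          (if v ∈ E j then Fin.castSucc (g j v) else Fin.last n) =
          (if w ∈ E j then Fin.castSucc (g j w) else Fin.last n)) ∧
        (if v ∈ E i then Fin.castSucc (g i v) else Fin.last n) <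
        (if w ∈ E i then Fin.castSucc (g i w) else Fin.last n) := by
  intro v w hvw
  obtain ⟨i, hi⟩ := hEsurj {v} (Finset.singleton_nonempty v)
  refine ⟨i, fun j hj => ?_, ?_⟩
  · have hprec : Prec (E j) {v} := hi ▸ hEmono j i hj
    have hv : v ∉ E j := fun h => (hprec.lt_of_mem_of_singleton h).false
    have hw : w ∉ E j := fun h => (hprec.lt_of_mem_of_singleton h).asymm hvw
    rw [if_neg hv, if_neg hw]
  · rw [hi, if_pos (Finset.mem_singleton_self v),
      if_neg (Finset.notMem_singleton.mpr hvw.ne')]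
    exact Fin.castSucc_lt_last _

/-- let `B` be a finite ordered relational structure on `{0,…,n-1}` (ordered
naturally: the language contains a symbol `le` interpreted as `≤`), `N = 2^n - 1`,
`E : Fin N → Finset (Fin n)` the `≺`-increasing enumeration of the nonempty substructures
of `B`, `D i` the lexicographically first substructure isomorphic to `E i`, and
`g i : E i → D i` the (unique) isomorphism. Define `φ(v)_i = g i v` if `v ∈ E i` and
`φ(v)_i = n` otherwise. Then `v < w` implies `φ(v)` is strictly lexicographically smaller
than `φ(w)`. -/
theorem stmt_16 (L : Language) [L.IsRelational] (n : ℕ) (hn : 0 < n)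
    [L.Structure (Fin n)] (le : L.Relations 2)
    (hle : ∀ x : Fin 2 → Fin n, Structure.RelMap le x ↔ x 0 ≤ x 1)
    (N : ℕ) (hN : N = 2 ^ n - 1)
    (E : Fin N → Finset (Fin n))
    (hEne : ∀ i : Fin N, (E i).Nonempty)
    (hEsurj : ∀ s : Finset (Fin n), s.Nonempty → ∃ i : Fin N, E i = s)
    (hEmono : ∀ i j : Fin N, i < j → Prec (E i) (E j))
    (D : Fin N → Finset (Fin n)) (g : Fin N → Fin n → Fin n)
    (hiso : ∀ i : Fin N, IsIsoOn L (E i) (D i) (g i))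
    (hfirst : ∀ (i : Fin N) (t : Finset (Fin n)),
      (∃ g' : Fin n → Fin n, IsIsoOn L (E i) t g') → t = D i ∨ FLex (D i) t) :
    ∀ v w : Fin n, v < w →
      ∃ i : Fin N,
        (∀ j : Fin N, j < i →
          (if v ∈ E j then Fin.castSucc (g j v) else Fin.last n) =
          (if w ∈ E j then Fin.castSucc (g j w) else Fin.last n)) ∧
        (if v ∈ E i then Fin.castSucc (g i v) else Fin.last n) <
        (if w ∈ E i then Fin.castSucc (g i w) else Fin.last n) :=
  stmt_16_general n N E hEsurj hEmono g
end
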